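/- The K-algebra homomorphism π : A → K[t,t⁻¹] determined by π(Y) = t and π(X) = t⁻¹ is surjective and its kernel equals J; consequently A/J is isomorphic as a K-algebra to the Laurent polynomial ring K[t,t⁻¹]. -/

import Mathlib

/-!
Modulo `J` we have `YX = 1` as well as `XY = 1`, so the class of `Y` is a unit of `A/J` with
inverse the class of `X`. The universal property of `K[t,t⁻¹] = K[ℤ]` therefore gives
`ψ : K[t,t⁻¹] → A/J` with `ψ t = Y`, and `ψ ∘ π` is the quotient map because both agree on `X`
and `Y`; hence `ker π ⊆ J`. Conversely `π w = 1 - t t⁻¹ = 0`, so `J ⊆ ker π`. Finally `π` is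
surjective since its range contains `t` and `t⁻¹`, which generate `K[t,t⁻¹]` as a `K`-algebra.
-/

noncomputable section

/-- The relation `X * Y = 1` defining the Jacobson algebra. -/
def JacRel (K : Type) [Field K] : FreeAlgebra K (Fin 2) → FreeAlgebra K (Fin 2) → Prop :=
  fun a b => a = FreeAlgebra.ι K (0 : Fin 2) * FreeAlgebra.ι K (1 : Fin 2) ∧ b = 1

/-- The Jacobson algebra `K⟨X, Y ∣ XY = 1⟩`. -/
abbrev Jac (K : Type) [Field K] := RingQuot (JacRel K)

variable (K : Type) [Field K]

/-- The generator `X`. -/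
def Xg : Jac K := RingQuot.mkAlgHom K (JacRel K) (FreeAlgebra.ι K 0)
/-- The generator `Y`. -/
def Yg : Jac K := RingQuot.mkAlgHom K (JacRel K) (FreeAlgebra.ι K 1)

/-- `w = 1 - YX`. -/
def wE : Jac K := 1 - Yg K * Xg K

/-- The two-sided ideal of the Jacobson algebra generated by `w = 1 - YX`. -/
def JacJ : TwoSidedIdeal (Jac K) := TwoSidedIdeal.span {wE K}

/-- The `K`-algebra homomorphism `π : A → K[t,t⁻¹]` with `π X = t⁻¹` and `π Y = t`. -/
def piJ : Jac K →ₐ[K] LaurentPolynomial K :=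
  RingQuot.liftAlgHom K
    ⟨FreeAlgebra.lift K
        (fun i : Fin 2 => if i = 0 then LaurentPolynomial.T (-1) else LaurentPolynomial.T 1),
      by
        rintro a b ⟨ha, hb⟩
        subst ha; subst hb
        rw [map_mul, map_one, FreeAlgebra.lift_ι_apply, FreeAlgebra.lift_ι_apply,
          if_pos rfl, if_neg (by decide), ← LaurentPolynomial.T_add]
        norm_num⟩

open LaurentPolynomial

theorem LaurentPolynomial.adjoin_T_one_T_neg_one {R : Type*} [CommSemiring R] :
    Algebra.adjoin R {(T 1 : R[T;T⁻¹]), T (-1)} = ⊤ := by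
  set S := Algebra.adjoin R {(T 1 : R[T;T⁻¹]), T (-1)}
  have hT : ∀ n : ℤ, (T n : R[T;T⁻¹]) ∈ S := by
    intro n
    obtain ⟨k, rfl | rfl⟩ := n.eq_nat_or_neg
    · simpa [T_pow] using pow_mem (Algebra.subset_adjoin (by simp) : (T 1 : R[T;T⁻¹]) ∈ S) k
    · simpa [T_pow] using pow_mem (Algebra.subset_adjoin (by simp) : (T (-1) : R[T;T⁻¹]) ∈ S) k
  refine eq_top_iff.mpr fun p _ => p.induction_on' (fun _ _ => S.add_mem) fun n a => ?_
  rw [← smul_eq_C_mul]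
  exact S.smul_mem (hT n) a

theorem TwoSidedIdeal.ker_le_of_comp_eq_mk' {R S F G : Type*} [Ring R] [Ring S]
    [FunLike F R S] [RingHomClass F R S] (I : TwoSidedIdeal R) [FunLike G S I.ringCon.Quotient]
    [RingHomClass G S I.ringCon.Quotient] (f : F) (g : G) (h : ∀ a, g (f a) = I.ringCon.mk' a) :
    TwoSidedIdeal.ker f ≤ I := by
  intro a ha
  rw [TwoSidedIdeal.mem_ker] at ha
  rw [← TwoSidedIdeal.ker_ringCon_mk' I, TwoSidedIdeal.mem_ker, ← h, ha, map_zero]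

theorem TwoSidedIdeal.ringCon_ker {R S : Type*} [Ring R] [Ring S] (f : R →+* S) :
    (TwoSidedIdeal.ker f).ringCon = RingCon.ker f :=
  RingCon.ext fun _ _ => (RingCon.ker_apply f).symm

theorem piJ_Yg : piJ K (Yg K) = T 1 := by
  rw [piJ, Yg, RingQuot.liftAlgHom_mkAlgHom_apply, FreeAlgebra.lift_ι_apply, if_neg (by decide)]

theorem piJ_Xg : piJ K (Xg K) = T (-1) := by
  rw [piJ, Xg, RingQuot.liftAlgHom_mkAlgHom_apply, FreeAlgebra.lift_ι_apply, if_pos rfl]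

theorem JacJ_le_ker_piJ : JacJ K ≤ TwoSidedIdeal.ker (piJ K) := by
  refine TwoSidedIdeal.span_le.mpr ?_
  rintro _ rfl
  rw [SetLike.mem_coe, TwoSidedIdeal.mem_ker, wE, map_sub, map_one, map_mul, piJ_Yg, piJ_Xg,
    ← T_add, add_neg_cancel, T_zero, sub_self]

theorem Xg_mul_Yg : Xg K * Yg K = 1 := by
  rw [Xg, Yg, ← map_mul, ← map_one (RingQuot.mkAlgHom K (JacRel K))]
  exact RingQuot.mkAlgHom_rel K ⟨rfl, rfl⟩

theorem mk'_Yg_mul_Xg : (JacJ K).ringCon.mk' (Yg K * Xg K) = 1 := by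
  rw [← map_one (JacJ K).ringCon.mk', ← sub_eq_zero, ← map_sub, ← TwoSidedIdeal.mem_ker,
    TwoSidedIdeal.ker_ringCon_mk', ← neg_sub]
  exact (JacJ K).neg_mem (TwoSidedIdeal.subset_span rfl)

def unitYg : ((JacJ K).ringCon.Quotient)ˣ where
  val := (JacJ K).ringCon.mk' (Yg K)
  inv := (JacJ K).ringCon.mk' (Xg K)
  val_inv := by rw [← map_mul, mk'_Yg_mul_Xg]
  inv_val := by rw [← map_mul, Xg_mul_Yg, map_one]

def psiJ : K[T;T⁻¹] →ₐ[K] (JacJ K).ringCon.Quotient :=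
  AddMonoidAlgebra.lift K _ ℤ ((Units.coeHom _).comp (zpowersHom _ (unitYg K)))

theorem psiJ_T (n : ℤ) : psiJ K (T n) = ((unitYg K ^ n : _ˣ) : (JacJ K).ringCon.Quotient) := by
  rw [T, psiJ, AddMonoidAlgebra.lift_single, one_smul]
  rfl

theorem psiJ_comp_piJ : (psiJ K).comp (piJ K) = (JacJ K).ringCon.mkₐ K := by
  refine RingQuot.ringQuot_ext' _ _ _ (FreeAlgebra.hom_ext (funext fun i => ?_))
  fin_cases i
  · change psiJ K (piJ K (Xg K)) = (JacJ K).ringCon.mk' (Xg K)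
    rw [piJ_Xg, psiJ_T, zpow_neg_one]
    rfl
  · change psiJ K (piJ K (Yg K)) = (JacJ K).ringCon.mk' (Yg K)
    rw [piJ_Yg, psiJ_T, zpow_one]
    rfl

theorem ker_piJ : TwoSidedIdeal.ker (piJ K) = JacJ K :=
  le_antisymm
    ((JacJ K).ker_le_of_comp_eq_mk' (piJ K) (psiJ K) (AlgHom.congr_fun (psiJ_comp_piJ K)))
    (JacJ_le_ker_piJ K)

theorem piJ_surjective : Function.Surjective (piJ K) := by
  rw [← AlgHom.range_eq_top, eq_top_iff, ← adjoin_T_one_T_neg_one, Algebra.adjoin_le_iff]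
  rintro _ (rfl | rfl)
  exacts [⟨Yg K, piJ_Yg K⟩, ⟨Xg K, piJ_Xg K⟩]

/-- The homomorphism `π : A → K[t,t⁻¹]` given by `π Y = t`, `π X = t⁻¹` is surjective with
kernel `J`; consequently `A/J ≅ K[t,t⁻¹]` as `K`-algebras. -/
theorem stmt3 :
    piJ K (Yg K) = LaurentPolynomial.T 1 ∧
    piJ K (Xg K) = LaurentPolynomial.T (-1) ∧
    Function.Surjective (piJ K) ∧
    (∀ a : Jac K, piJ K a = 0 ↔ a ∈ JacJ K) ∧
    ∃ e : (JacJ K).ringCon.Quotient ≃+* LaurentPolynomial K,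
      ∀ a : Jac K, e ((JacJ K).ringCon.mk' a) = piJ K a := by
  have hcon : (JacJ K).ringCon = RingCon.ker (piJ K : Jac K →+* K[T;T⁻¹]) := by
    rw [← ker_piJ]
    exact TwoSidedIdeal.ringCon_ker _
  refine ⟨piJ_Yg K, piJ_Xg K, piJ_surjective K, fun a => ?_,
    RingEquiv.ofBijective ((JacJ K).ringCon.lift _ hcon.le)
      (RingCon.lift_bijective_iff.mpr ⟨hcon, piJ_surjective K⟩),
    fun a => rfl⟩
  rw [← ker_piJ, TwoSidedIdeal.mem_ker]
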